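/- Let M be a symmetric matrix with block structure M = [[M_AA, M_AC, 0],[M_CA, M_CC, M_CB],[0, M_BC, M_BB]] corresponding to a partition of indices into sets A, C, B (no nonzero entries between A and B). Then M is positive definite if and only if M_AA > 0, M_BB > 0, and S₁ + S₂ − M_CC > 0, where S₁ = M_CC − M_CA M_AA⁻¹ M_AC and S₂ = M_CC − M_CB M_BB⁻¹ M_BC. -/

import Mathlib

open Matrix

/-!
Eliminate the two outer blocks one at a time. Positive definiteness is positive semidefiniteness
plus a nonzero determinant, and both survive passing to a Schur complement: the first by
Mathlib's semidefinite Schur complement criterion, the second by `det M = det A * det (D - Bᴴ A⁻¹ B)`.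
Taking the Schur complement of `M_AA` leaves the `C ⊕ B` block with `M_CC` replaced by `S₁`,
because `M_AC` has no `B` columns; then the Schur complement of `M_BB` in that block is
`S₁ - M_CB M_BB⁻¹ M_BC = S₁ + S₂ - M_CC`.
-/

namespace Matrix

open ComplexOrder

variable {𝕜 m n : Type*} [RCLike 𝕜] [Fintype m] [Fintype n] [DecidableEq m] [DecidableEq n]

theorem posDef_iff_posSemidef_and_det_ne_zero {A : Matrix n n 𝕜} :
    A.PosDef ↔ A.PosSemidef ∧ A.det ≠ 0 :=
  ⟨fun h => ⟨h.posSemidef, h.det_pos.ne'⟩, fun h => h.1.posDef_iff_det_ne_zero.mpr h.2⟩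

theorem posDef_fromBlocks₁₁_iff {A : Matrix m m 𝕜} {B : Matrix m n 𝕜} {D : Matrix n n 𝕜} :
    (fromBlocks A B Bᴴ D).PosDef ↔ A.PosDef ∧ (D - Bᴴ * A⁻¹ * B).PosDef := by
  by_cases hA : A.PosDef
  · have := hA.isUnit.invertible
    rw [and_iff_right hA, posDef_iff_posSemidef_and_det_ne_zero,
      posDef_iff_posSemidef_and_det_ne_zero, hA.fromBlocks₁₁ B D, det_fromBlocks₁₁,
      invOf_eq_nonsing_inv, mul_ne_zero_iff, and_iff_right hA.det_pos.ne']
  · exact iff_of_false (fun h => hA (h.submatrix Sum.inl_injective)) (fun h => hA h.1)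

theorem posDef_fromBlocks₂₂_iff {A : Matrix m m 𝕜} {B : Matrix m n 𝕜} {D : Matrix n n 𝕜} :
    (fromBlocks A B Bᴴ D).PosDef ↔ D.PosDef ∧ (A - B * D⁻¹ * Bᴴ).PosDef := by
  by_cases hD : D.PosDef
  · have := hD.isUnit.invertible
    rw [and_iff_right hD, posDef_iff_posSemidef_and_det_ne_zero,
      posDef_iff_posSemidef_and_det_ne_zero, hD.fromBlocks₂₂ A B, det_fromBlocks₂₂,
      invOf_eq_nonsing_inv, mul_ne_zero_iff, and_iff_right hD.det_pos.ne']
  · exact iff_of_false (fun h => hD (h.submatrix Sum.inr_injective)) (fun h => hD h.1)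

end Matrix

theorem stmt_18_general {ιA ιC ιB : Type*} [Fintype ιA] [Fintype ιC] [Fintype ιB]
    [DecidableEq ιA] [DecidableEq ιC] [DecidableEq ιB]
    (MAA : Matrix ιA ιA ℝ) (MAC : Matrix ιA ιC ℝ) (MCC : Matrix ιC ιC ℝ)
    (MCB : Matrix ιC ιB ℝ) (MBB : Matrix ιB ιB ℝ)
    (M : Matrix (ιA ⊕ ιC ⊕ ιB) (ιA ⊕ ιC ⊕ ιB) ℝ)
    (hM : M = Matrix.fromBlocks MAA (Matrix.fromCols MAC 0)
      (Matrix.fromRows MACᵀ 0) (Matrix.fromBlocks MCC MCB MCBᵀ MBB)) :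
    M.PosDef ↔
      MAA.PosDef ∧ MBB.PosDef ∧
        ((MCC - MACᵀ * MAA⁻¹ * MAC) + (MCC - MCB * MBB⁻¹ * MCBᵀ) - MCC).PosDef := by
  have hM_hermitian_form : M = fromBlocks MAA (fromCols MAC 0) (fromCols MAC 0)ᴴ
      (fromBlocks MCC MCB MCBᴴ MBB) := by
    simp [hM, conjTranspose_eq_transpose_of_trivial, transpose_fromCols]
  have hschur_AA : fromBlocks MCC MCB MCBᴴ MBB - (fromCols MAC 0)ᴴ * MAA⁻¹ * fromCols MAC 0 =
      fromBlocks (MCC - MACᵀ * MAA⁻¹ * MAC) MCB MCBᴴ MBB := by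
    rw [conjTranspose_fromCols_eq_fromRows_conjTranspose, fromRows_mul, fromRows_mul_fromCols]
    ext (i | i) (j | j) <;> simp [conjTranspose_eq_transpose_of_trivial]
  rw [hM_hermitian_form, posDef_fromBlocks₁₁_iff, hschur_AA, posDef_fromBlocks₂₂_iff,
    conjTranspose_eq_transpose_of_trivial, add_sub_assoc, sub_sub_cancel_left, ← sub_eq_add_neg]

/-- For a symmetric matrix `M = [[M_AA, M_AC, 0], [M_CA, M_CC, M_CB], [0, M_BC, M_BB]]`
(with `M_CA = M_ACᵀ`, `M_BC = M_CBᵀ`), `M` is positive definite iff `M_AA > 0`,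
`M_BB > 0` and `S₁ + S₂ - M_CC > 0`, where `S₁`, `S₂` are the Schur complements of
`M_AA` and `M_BB` in the corresponding 2×2 blocks. -/
theorem stmt_18 {ιA ιC ιB : Type*} [Fintype ιA] [Fintype ιC] [Fintype ιB]
    [DecidableEq ιA] [DecidableEq ιC] [DecidableEq ιB]
    (MAA : Matrix ιA ιA ℝ) (MAC : Matrix ιA ιC ℝ) (MCC : Matrix ιC ιC ℝ)
    (MCB : Matrix ιC ιB ℝ) (MBB : Matrix ιB ιB ℝ)
    (hAA : MAA.IsSymm) (hCC : MCC.IsSymm) (hBB : MBB.IsSymm)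
    (M : Matrix (ιA ⊕ ιC ⊕ ιB) (ιA ⊕ ιC ⊕ ιB) ℝ)
    (hM : M = Matrix.fromBlocks MAA (Matrix.fromCols MAC 0)
      (Matrix.fromRows MACᵀ 0) (Matrix.fromBlocks MCC MCB MCBᵀ MBB)) :
    M.PosDef ↔
      MAA.PosDef ∧ MBB.PosDef ∧
        ((MCC - MACᵀ * MAA⁻¹ * MAC) + (MCC - MCB * MBB⁻¹ * MCBᵀ) - MCC).PosDef :=
  stmt_18_general MAA MAC MCC MCB MBB M hM
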